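/- arXiv:2110.00960 — 4 statements merged into one kernel-verified Lean document; each statement's English description precedes it below -/
import Mathlib

section
/- In any window of 2f+1 consecutive rounds, there exists a round r in the window such that both r and r+1 are assigned honest leaders by the round-robin rule (leader of round r is party r mod n), provided n = 3f+1 and at most f parties are Byzantine. -/
open Fin.NatCast Finset

/-!
The 2f+2 rounds R, …, R+2f+1 have pairwise distinct leaders, so at most f of them have a
Byzantine leader. They split into the f+1 disjoint pairs (R+2k, R+2k+1), so some pair
contains no such round.
-/

theorem Fin.natCast_injOn_Ico {n : ℕ} [NeZero n] (R : ℕ) {L : ℕ} (hL : L ≤ n) :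
    Set.InjOn (fun r : ℕ => (r : Fin n)) (Ico R (R + L)) := by
  intro a ha b hb hab
  simp only [coe_Ico, Set.mem_Ico] at ha hb
  have hmod : a ≡ b [MOD n] := Fin.ext_iff.mp hab
  exact hmod.eq_of_abs_lt (abs_sub_lt_iff.mpr ⟨by omega, by omega⟩)

theorem card_filter_natCast_mem_Ico_le {n : ℕ} [NeZero n] (B : Finset (Fin n)) (R : ℕ)
    {L : ℕ} (hL : L ≤ n) : #{r ∈ Ico R (R + L) | ((r : ℕ) : Fin n) ∈ B} ≤ #B :=
  card_le_card_of_injOn _ (fun _ hr => (mem_filter.mp hr).2)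
    ((Fin.natCast_injOn_Ico R hL).mono (filter_subset _ _))

theorem exists_pair_notMem_of_card_lt (S : Finset ℕ) (R : ℕ) {m : ℕ} (hS : #S < m) :
    ∃ k < m, R + 2 * k ∉ S ∧ R + 2 * k + 1 ∉ S := by
  by_contra! hcover
  -- `s ↦ (s - R) / 2` sends both rounds of the k-th pair to k, so it maps `S` onto `range m`.
  have hrange : range m ⊆ S.image (fun s => (s - R) / 2) := by
    intro k hk
    rw [mem_image]
    by_cases hk0 : R + 2 * k ∈ S
    · exact ⟨_, hk0, by omega⟩
    · exact ⟨_, hcover k (mem_range.mp hk) hk0, by omega⟩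
  have hcard := (card_le_card hrange).trans card_image_le
  rw [card_range] at hcard
  omega

/-- In any window of 2f+1 consecutive rounds there is a round r such that
both r and r+1 have honest round-robin leaders (leader of round r is
r mod n, n = 3f+1, at most f Byzantine parties). -/
theorem stmt1 (f : ℕ) (hf : 1 ≤ f) (B : Finset (Fin (3*f+1)))
    (hB : B.card ≤ f) (R : ℕ) :
    ∃ r, R ≤ r ∧ r + 1 ≤ R + 2*f + 1 ∧
      (↑r : Fin (3*f+1)) ∉ B ∧ (↑(r+1) : Fin (3*f+1)) ∉ B := by
  have hbyz := card_filter_natCast_mem_Ico_le B R (L := 2 * f + 2) (by omega)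
  obtain ⟨k, hk, hfst, hsnd⟩ :=
    exists_pair_notMem_of_card_lt _ R (m := f + 1) (hbyz.trans_lt (by omega))
  refine ⟨R + 2 * k, by omega, by omega, fun h => hfst ?_, fun h => hsnd ?_⟩ <;>
    exact mem_filter.mpr ⟨mem_Ico.mpr ⟨by omega, by omega⟩, h⟩
end

section
/- Within any f+2 consecutive rounds in which no party crashes and leaders are deterministically agreed upon by all honest parties, there must be a round whose chosen leader is alive, given that: leaders are chosen by a function of the round; at most f parties have crashed before the window; and whenever a round's leader is crashed, the next round's leader is chosen round-robin among all n = 3f+1 parties (advancing by one each round). Formally: if a function ℓ : ℕ → Fin n satisfies ℓ(r+1) = (ℓ(r) + 1) mod n whenever ℓ(r) is in a crashed set C with |C| ≤ f, then for any starting round R there exists r ∈ [R, R+f+1] with ℓ(r) ∉ C. -/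
/-! If the leaders of rounds `R, …, R + f` were all crashed, round-robin advancement would make
them `ℓ R, ℓ R + 1, …, ℓ R + f`: these are `f + 1` distinct parties since `f + 1 ≤ 3f + 1`,
all lying in `C`, contradicting `#C ≤ f`. -/

open Finset Fin.NatCast

theorem eq_add_natCast_of_succ_eq_add_one {α : Type*} [AddMonoidWithOne α] (ℓ : ℕ → α) {m : ℕ}
    (hstep : ∀ i < m, ℓ (i + 1) = ℓ i + 1) : ∀ i ≤ m, ℓ i = ℓ 0 + i := by
  intro i hi
  induction i with
  | zero => simp
  | succ k ih => rw [hstep k hi, ih (by omega), Nat.cast_succ, add_assoc]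

theorem Fin.natCast_injOn_range (n : ℕ) [NeZero n] :
    Set.InjOn (fun i : ℕ => (i : Fin n)) (range n) := by
  intro a ha b hb hab
  simp only [coe_range, Set.mem_Iio] at ha hb
  simpa [Fin.val_natCast, Nat.mod_eq_of_lt ha, Nat.mod_eq_of_lt hb] using congrArg Fin.val hab

theorem Fin.card_image_add_natCast_range {n m : ℕ} [NeZero n] (a : Fin n) (hm : m ≤ n) :
    ((range m).image fun i : ℕ => a + i).card = m := by
  rw [card_image_of_injOn, card_range]
  intro i hi j hj hij
  exact Fin.natCast_injOn_range n (range_subset_range.2 hm hi) (range_subset_range.2 hm hj)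
    (add_left_cancel hij)

theorem le_card_of_forall_mem_of_roundRobin {n : ℕ} [NeZero n] (C : Finset (Fin n))
    (ℓ : ℕ → Fin n) (hstep : ∀ r, ℓ r ∈ C → ℓ (r + 1) = ℓ r + 1) {R m : ℕ} (hm : m ≤ n)
    (hrun : ∀ i < m, ℓ (R + i) ∈ C) : m ≤ C.card := by
  have hprog := eq_add_natCast_of_succ_eq_add_one (fun i => ℓ (R + i)) (m := m)
    fun i hi => hstep _ (hrun i hi)
  calc m = ((range m).image fun i : ℕ => ℓ R + i).card :=
        (Fin.card_image_add_natCast_range _ hm).symm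
    _ ≤ C.card := card_le_card <| by
      simp only [subset_iff, mem_image, mem_range, forall_exists_index, and_imp]
      rintro _ i hi rfl
      simpa [hprog i hi.le] using hrun i hi

/-- In any f+2 consecutive rounds a round with an alive leader exists:
if whenever the leader of round r is crashed the next round's leader
advances round-robin by one (mod n = 3f+1), and at most f parties are
crashed, then in [R, R+f+1] some round has a non-crashed leader. -/
theorem stmt6 (f : ℕ) (C : Finset (Fin (3*f+1))) (hC : C.card ≤ f)
    (ℓ : ℕ → Fin (3*f+1))
    (hstep : ∀ r, ℓ r ∈ C → ℓ (r+1) = ℓ r + 1) (R : ℕ) :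
    ∃ r, R ≤ r ∧ r ≤ R + f + 1 ∧ ℓ r ∉ C := by
  by_contra! hcrashed
  have := le_card_of_forall_mem_of_roundRobin C ℓ hstep (R := R) (m := f + 1) (by omega)
    fun i hi => hcrashed (R + i) (by omega) (by omega)
  omega
end

section
/- If in every window of 5f+3 consecutive rounds after some round G at least one honest block is committed, then the proportion of Byzantine blocks among committed blocks with round numbers in [G, G+m(5f+3)) is at most 1 - m/(total committed blocks in that range); in particular, among any N ≥ 5f+3 consecutive rounds after G, the number of honest committed blocks is at least ⌊N/(5f+3)⌋. -/
/-!
The first `⌊N/(5f+3)⌋ · (5f+3)` rounds of the interval split into `⌊N/(5f+3)⌋` disjoint windows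
of `5f+3` consecutive rounds, and each window contains a round with an honest committed block.
-/

open Finset

section Windows

variable {P : ℕ → Prop} [DecidablePred P] {G k : ℕ}

theorem le_card_filter_Ico_mul (hP : ∀ r, G ≤ r → ∃ r' ∈ Ico r (r + k), P r') (m : ℕ) {s : ℕ}
    (hs : G ≤ s) : m ≤ #{r ∈ Ico s (s + m * k) | P r} := by
  induction m generalizing s with
  | zero => exact Nat.zero_le _
  | succ m ih =>
    obtain ⟨r', hr', hPr'⟩ := hP s hs
    have hfirst : 1 ≤ #{r ∈ Ico s (s + k) | P r} := card_pos.2 ⟨r', mem_filter.2 ⟨hr', hPr'⟩⟩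
    have hrest := ih (s := s + k) (by omega)
    have hsplit : Ico s (s + (m + 1) * k) = Ico s (s + k) ∪ Ico (s + k) (s + k + m * k) := by
      rw [Ico_union_Ico_eq_Ico (by omega) (by omega)]
      congr 1
      ring
    rw [hsplit, filter_union, card_union_of_disjoint
      (disjoint_filter_filter (Ico_disjoint_Ico_consecutive _ _ _))]
    omega

theorem div_le_card_filter_Ico (hP : ∀ r, G ≤ r → ∃ r' ∈ Ico r (r + k), P r') (N : ℕ) {s : ℕ}
    (hs : G ≤ s) : N / k ≤ #{r ∈ Ico s (s + N) | P r} :=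
  (le_card_filter_Ico_mul hP (N / k) hs).trans <|
    card_le_card <| filter_subset_filter _ <|
      Ico_subset_Ico_right <| Nat.add_le_add_left (Nat.div_mul_le_self N k) s

end Windows

open Classical in
/-- If in every window of 5f+3 consecutive rounds after round G at least one
honest block is committed, then in any interval of N consecutive rounds
starting at or after G, at least ⌊N/(5f+3)⌋ honest blocks are committed. -/
theorem stmt7 {Block : Type*} (f G : ℕ)
    (commit : ℕ → Option Block) (honest : Block → Prop)
    (h : ∀ r, G ≤ r → ∃ r', r ≤ r' ∧ r' ≤ r + 5*f + 2 ∧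
      ∃ b, commit r' = some b ∧ honest b)
    (s N : ℕ) (hs : G ≤ s) :
    N / (5*f + 3) ≤
      ((Finset.Ico s (s + N)).filter
        (fun r' => ∃ b, commit r' = some b ∧ honest b)).card := by
  refine div_le_card_filter_Ico (fun r hr => ?_) N hs
  obtain ⟨r', hle, hge, hhonest⟩ := h r hr
  exact ⟨r', mem_Ico.2 ⟨hle, by omega⟩, hhonest⟩
end

section
/- Bounded-skip composition: if rounds are partitioned so that (a) within each maximal crash-free stretch after the first f+2 rounds of the stretch, every round commits a block, and (b) there are at most f crash events, then the total number of non-committing rounds is at most f·(f+4) + (f+4) = (f+1)(f+4), i.e., O(f^2). -/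
/-!
Every non-productive round outside `K` lies among the first `f + 2` rounds of the crash-free
stretch containing it. A stretch starts at round `0` or right after a crash, so there are at
most `f + 1` stretches; hence at most `f + (f + 1)(f + 2) ≤ (f + 1)(f + 4)` non-productive rounds.
-/

open Finset

def stretchStarts (K : Finset ℕ) : Finset ℕ := insert 0 (K.image (· + 1))

theorem card_stretchStarts_le (K : Finset ℕ) : (stretchStarts K).card ≤ K.card + 1 :=
  (card_insert_le _ _).trans (Nat.succ_le_succ card_image_le)

theorem exists_stretchStart {K : Finset ℕ} {x : ℕ} (hx : x ∉ K) :
    ∃ a ∈ stretchStarts K, a ≤ x ∧ ∀ y ∈ Icc a x, y ∉ K := by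
  induction x with
  | zero => exact ⟨0, mem_insert_self _ _, le_rfl, by simpa using hx⟩
  | succ x ih =>
    by_cases hxK : x ∈ K
    · exact ⟨x + 1, mem_insert_of_mem (mem_image_of_mem _ hxK), le_rfl, by simpa using hx⟩
    · obtain ⟨a, ha, hax, hfree⟩ := ih hxK
      refine ⟨a, ha, hax.trans x.le_succ, fun y hy => ?_⟩
      rcases (mem_Icc.mp hy).2.eq_or_lt with rfl | hlt
      · exact hx
      · exact hfree y (mem_Icc.mpr ⟨(mem_Icc.mp hy).1, Nat.lt_succ_iff.mp hlt⟩)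

theorem card_biUnion_Ico_le (s : Finset ℕ) (d : ℕ) :
    (s.biUnion fun a => Ico a (a + d)).card ≤ s.card * d :=
  card_biUnion_le_card_mul _ _ _ fun a _ => by simp

theorem filter_not_subset_union_biUnion {K : Finset ℕ} {P : ℕ → Prop} [DecidablePred P] {d : ℕ}
    (h : ∀ a b : ℕ, (∀ x ∈ Icc a b, x ∉ K) → ∀ x ∈ Icc a b, a + d ≤ x → P x)
    (s : Finset ℕ) :
    s.filter (fun x => ¬ P x) ⊆ K ∪ (stretchStarts K).biUnion fun a => Ico a (a + d) := by
  intro x hx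
  by_cases hxK : x ∈ K
  · exact mem_union_left _ hxK
  obtain ⟨a, ha, hax, hfree⟩ := exists_stretchStart hxK
  have hxd : x < a + d := by
    by_contra! hle
    exact (mem_filter.mp hx).2 (h a x hfree x (mem_Icc.mpr ⟨hax, le_rfl⟩) hle)
  exact mem_union_right _ (mem_biUnion.mpr ⟨a, ha, mem_Ico.mpr ⟨hax, hxd⟩⟩)

open Classical in
/-- Bounded-skip composition: crashes occur at rounds in a set K with
|K| ≤ f; within any crash-free interval every round except possibly the
first f+2 commits a block ('productive'). Then for every horizon N the
number of non-productive rounds is at most (f+1)(f+4). -/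
theorem stmt17 (f : ℕ) (K : Finset ℕ) (hK : K.card ≤ f)
    (productive : ℕ → Prop)
    (h : ∀ a b : ℕ, (∀ x ∈ Finset.Icc a b, x ∉ K) →
      ∀ x ∈ Finset.Icc a b, a + f + 2 ≤ x → productive x) :
    ∀ N : ℕ, ((Finset.range N).filter (fun x => ¬ productive x)).card
      ≤ (f+1) * (f+4) := by
  intro N
  have hcover := filter_not_subset_union_biUnion (d := f + 2)
    (fun a b hab x hx hax => h a b hab x hx (by omega)) (range N)
  calc ((range N).filter (fun x => ¬ productive x)).card
      ≤ K.card + ((stretchStarts K).biUnion fun a => Ico a (a + (f + 2))).card :=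
        (card_le_card hcover).trans (card_union_le _ _)
    _ ≤ f + (f + 1) * (f + 2) := by
        gcongr
        exact (card_biUnion_Ico_le _ _).trans
          (Nat.mul_le_mul_right _ ((card_stretchStarts_le K).trans (by omega)))
    _ ≤ (f + 1) * (f + 4) := by nlinarith
end
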